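/- Every monomial in the generators t_{ij} of T_n can be written as a linear combination of monomials in which all generators of the form t_{αn} (α < n) appear to the right of all generators t_{βγ} with β,γ < n. Equivalently, the multiplication map T_{n−1} ⊗ F⟨u_1,…,u_{n−1}⟩ → T_n sending P ⊗ Q to P·Q(t_{1n},…,t_{n−1,n}) is surjective, where F⟨u_1,…,u_{n−1}⟩ is the free associative algebra. -/

import Mathlib

noncomputable section

namespace ChordDiag

/-- Index type for the generators `t_{ij}`, `1 ≤ i ≠ j ≤ n`. -/
abbrev Gen (n : ℕ) := {p : Fin n × Fin n // p.1 ≠ p.2}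

/-- The defining relations of the algebra of chord diagrams (infinitesimal braid relations):
`t_{ij} = t_{ji}`; `[t_{ij}, t_{kl}] = 0` for `i,j,k,l` pairwise distinct;
`[t_{ij}, t_{ik} + t_{jk}] = 0` for `i,j,k` pairwise distinct. -/
inductive Rel (K : Type*) [CommRing K] (n : ℕ) :
    FreeAlgebra K (Gen n) → FreeAlgebra K (Gen n) → Prop
  | symm (i j : Fin n) (hij : i ≠ j) :
      Rel K n (FreeAlgebra.ι K (⟨(i, j), hij⟩ : Gen n))
        (FreeAlgebra.ι K (⟨(j, i), hij.symm⟩ : Gen n))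
  | comm (i j k l : Fin n) (hij : i ≠ j) (hkl : k ≠ l)
      (hik : i ≠ k) (hil : i ≠ l) (hjk : j ≠ k) (hjl : j ≠ l) :
      Rel K n (FreeAlgebra.ι K (⟨(i, j), hij⟩ : Gen n) * FreeAlgebra.ι K (⟨(k, l), hkl⟩ : Gen n))
        (FreeAlgebra.ι K (⟨(k, l), hkl⟩ : Gen n) * FreeAlgebra.ι K (⟨(i, j), hij⟩ : Gen n))
  | braid (i j k : Fin n) (hij : i ≠ j) (hik : i ≠ k) (hjk : j ≠ k) :
      Rel K n
        (FreeAlgebra.ι K (⟨(i, j), hij⟩ : Gen n) *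
          (FreeAlgebra.ι K (⟨(i, k), hik⟩ : Gen n) + FreeAlgebra.ι K (⟨(j, k), hjk⟩ : Gen n)))
        ((FreeAlgebra.ι K (⟨(i, k), hik⟩ : Gen n) + FreeAlgebra.ι K (⟨(j, k), hjk⟩ : Gen n)) *
          FreeAlgebra.ι K (⟨(i, j), hij⟩ : Gen n))

/-- The algebra `T_n` of chord diagrams. -/
abbrev T (K : Type*) [CommRing K] (n : ℕ) := RingQuot (Rel K n)

/-- The generator `t_{ij}` of `T_n` (junk value `0` if `i = j`). -/
def t (K : Type*) [CommRing K] (n : ℕ) (i j : Fin n) : T K n :=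
  if h : i = j then 0
  else RingQuot.mkAlgHom K (Rel K n) (FreeAlgebra.ι K (⟨(i, j), h⟩ : Gen n))

end ChordDiag

open ChordDiag

section Aux

variable {K : Type*} [CommRing K] {n : ℕ}

lemma t_def (i j : Fin n) (h : i ≠ j) :
    t K n i j = RingQuot.mkAlgHom K (Rel K n) (FreeAlgebra.ι K (⟨(i, j), h⟩ : Gen n)) :=
  dif_neg h

lemma t_diag (i : Fin n) : t K n i i = 0 := dif_pos rfl

lemma t_symm (i j : Fin n) : t K n i j = t K n j i := by
  by_cases h : i = j
  · subst h; rfl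
  · rw [t_def i j h, t_def j i (Ne.symm h)]
    exact RingQuot.mkAlgHom_rel K (Rel.symm i j h)

lemma t_comm (i j k l : Fin n) (hik : i ≠ k) (hil : i ≠ l) (hjk : j ≠ k) (hjl : j ≠ l) :
    t K n i j * t K n k l = t K n k l * t K n i j := by
  by_cases hij : i = j
  · subst hij; rw [t_diag, zero_mul, mul_zero]
  by_cases hkl : k = l
  · subst hkl; rw [t_diag, zero_mul, mul_zero]
  rw [t_def i j hij, t_def k l hkl, ← map_mul, ← map_mul]
  exact RingQuot.mkAlgHom_rel K (Rel.comm i j k l hij hkl hik hil hjk hjl)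

lemma t_braid (i j k : Fin n) (hij : i ≠ j) (hik : i ≠ k) (hjk : j ≠ k) :
    t K n i j * (t K n i k + t K n j k) = (t K n i k + t K n j k) * t K n i j := by
  rw [t_def i j hij, t_def i k hik, t_def j k hjk, ← map_add, ← map_mul, ← map_mul]
  exact RingQuot.mkAlgHom_rel K (Rel.braid i j k hij hik hjk)

/-- `t_{an} t_{ab} = t_{ab} t_{an} + [t_{bn}, t_{an}]`. -/
lemma t_swap (a b c : Fin n) (hab : a ≠ b) (hac : a ≠ c) (hbc : b ≠ c) :
    t K n a c * t K n a b =
      t K n a b * t K n a c + (t K n b c * t K n a c - t K n a c * t K n b c) := by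
  have h := t_braid (K := K) a c b hac hab (Ne.symm hbc)
  -- t_ac * (t_ab + t_cb) = (t_ab + t_cb) * t_ac
  rw [mul_add, add_mul] at h
  have hcb : t K n c b = t K n b c := t_symm c b
  rw [hcb] at h
  rw [← add_sub_assoc]
  exact eq_sub_of_add_eq h

end Aux

/-- every element of `T_n` (here `T_{n+1}`, with the last strand playing the role
of the index `n`) is a linear combination of products `P · Q` in which `P` lies in the
subalgebra `T_{n−1}` generated by the `t_{βγ}`, `β,γ < n`, and `Q` lies in the subalgebra
generated by the `t_{αn}`, `α < n` (i.e. is a combination of monomials in the `t_{αn}`);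
equivalently, the multiplication map `T_{n−1} ⊗ F⟨t_{1n},…,t_{n−1,n}⟩ → T_n` is surjective. -/
theorem stmt9 (K : Type*) [Field K] [CharZero K] (n : ℕ) (z : T K (n + 1)) :
    z ∈ Submodule.span K
        {x : T K (n + 1) |
          ∃ p ∈ Algebra.adjoin K
              {y : T K (n + 1) | ∃ i j : Fin n, y = t K (n + 1) i.castSucc j.castSucc},
            ∃ q ∈ Algebra.adjoin K
              {y : T K (n + 1) | ∃ α : Fin n, y = t K (n + 1) α.castSucc (Fin.last n)},
              x = p * q} := by
  set A := Algebra.adjoin K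
      {y : T K (n + 1) | ∃ i j : Fin n, y = t K (n + 1) i.castSucc j.castSucc} with hAdef
  set B := Algebra.adjoin K
      {y : T K (n + 1) | ∃ α : Fin n, y = t K (n + 1) α.castSucc (Fin.last n)} with hBdef
  set M := Submodule.span K {x : T K (n + 1) | ∃ p ∈ A, ∃ q ∈ B, x = p * q} with hMdef
  have hgenA : ∀ i j : Fin n, t K (n + 1) i.castSucc j.castSucc ∈ A := fun i j =>
    Algebra.subset_adjoin ⟨i, j, rfl⟩
  have hgenB : ∀ α : Fin n, t K (n + 1) α.castSucc (Fin.last n) ∈ B := fun α =>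
    Algebra.subset_adjoin ⟨α, rfl⟩
  have hmem : ∀ p q : T K (n + 1), p ∈ A → q ∈ B → p * q ∈ M := fun p q hp hq =>
    Submodule.subset_span ⟨p, hp, q, hq, rfl⟩
  -- commutators of elements of B with generators of A land in B
  have hcomm : ∀ q ∈ B, ∀ β γ : Fin n,
      q * t K (n + 1) β.castSucc γ.castSucc - t K (n + 1) β.castSucc γ.castSucc * q ∈ B := by
    intro q hq β γ
    induction hq using Algebra.adjoin_induction with
    | mem x hx =>
      obtain ⟨α, rfl⟩ := hx
      by_cases hbg : β = γ
      · subst hbg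
        simp [t_diag, zero_mem]
      · have hbg' : β.castSucc ≠ γ.castSucc := by
          simpa [Fin.castSucc_inj] using hbg
        by_cases hab : α = β
        · subst hab
          have hs := t_swap (K := K) α.castSucc γ.castSucc (Fin.last n) hbg'
            (Fin.castSucc_lt_last α).ne (Fin.castSucc_lt_last γ).ne
          rw [hs, add_sub_cancel_left]
          exact sub_mem (mul_mem (hgenB γ) (hgenB α)) (mul_mem (hgenB α) (hgenB γ))
        · by_cases hag : α = γ
          · subst hag
            rw [t_symm β.castSucc α.castSucc]
            have hs := t_swap (K := K) α.castSucc β.castSucc (Fin.last n) (Ne.symm hbg')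
              (Fin.castSucc_lt_last α).ne (Fin.castSucc_lt_last β).ne
            rw [hs, add_sub_cancel_left]
            exact sub_mem (mul_mem (hgenB β) (hgenB α)) (mul_mem (hgenB α) (hgenB β))
          · have hab' : α.castSucc ≠ β.castSucc := by simpa [Fin.castSucc_inj] using hab
            have hag' : α.castSucc ≠ γ.castSucc := by simpa [Fin.castSucc_inj] using hag
            rw [t_comm α.castSucc (Fin.last n) β.castSucc γ.castSucc hab' hag'
              (Ne.symm (Fin.castSucc_lt_last β).ne) (Ne.symm (Fin.castSucc_lt_last γ).ne)]
            simpa using zero_mem B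
    | algebraMap r =>
      rw [Algebra.commutes]
      simpa using zero_mem B
    | add x y hxB hyB hx hy =>
      have h := add_mem hx hy
      have e : (x + y) * t K (n + 1) β.castSucc γ.castSucc -
          t K (n + 1) β.castSucc γ.castSucc * (x + y) =
          (x * t K (n + 1) β.castSucc γ.castSucc - t K (n + 1) β.castSucc γ.castSucc * x) +
            (y * t K (n + 1) β.castSucc γ.castSucc - t K (n + 1) β.castSucc γ.castSucc * y) := by
        rw [add_mul, mul_add, add_sub_add_comm]
      rw [e]; exact h
    | mul x y hxB hyB hx hy =>
      have h := add_mem (mul_mem hxB hy) (mul_mem hx hyB)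
      have e : x * y * t K (n + 1) β.castSucc γ.castSucc -
          t K (n + 1) β.castSucc γ.castSucc * (x * y) =
          x * (y * t K (n + 1) β.castSucc γ.castSucc - t K (n + 1) β.castSucc γ.castSucc * y) +
            (x * t K (n + 1) β.castSucc γ.castSucc - t K (n + 1) β.castSucc γ.castSucc * x) * y := by
        simp only [mul_sub, sub_mul, mul_assoc]
        abel
      rw [e]; exact h
  -- M is stable under left multiplication by A
  have hAmulM : ∀ p ∈ A, ∀ z ∈ M, p * z ∈ M := by
    intro p hp z hz
    induction hz using Submodule.span_induction with
    | mem x hx =>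
      obtain ⟨p', hp', q', hq', rfl⟩ := hx
      rw [← mul_assoc]
      exact hmem _ _ (mul_mem hp hp') hq'
    | zero => simp
    | add x y _ _ hx hy => simpa [mul_add] using add_mem hx hy
    | smul a x _ hx => rw [mul_smul_comm]; exact Submodule.smul_mem _ _ hx
  -- M is stable under right multiplication by B
  have hMmulB : ∀ q ∈ B, ∀ z ∈ M, z * q ∈ M := by
    intro q hq z hz
    induction hz using Submodule.span_induction with
    | mem x hx =>
      obtain ⟨p', hp', q', hq', rfl⟩ := hx
      rw [mul_assoc]
      exact hmem _ _ hp' (mul_mem hq' hq)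
    | zero => simp
    | add x y _ _ hx hy => simpa [add_mul] using add_mem hx hy
    | smul a x _ hx => rw [smul_mul_assoc]; exact Submodule.smul_mem _ _ hx
  -- M is stable under right multiplication by generators of A
  have hMmulGenA : ∀ β γ : Fin n, ∀ z ∈ M, z * t K (n + 1) β.castSucc γ.castSucc ∈ M := by
    intro β γ z hz
    induction hz using Submodule.span_induction with
    | mem x hx =>
      obtain ⟨p', hp', q', hq', rfl⟩ := hx
      have hkey : p' * q' * t K (n + 1) β.castSucc γ.castSucc =
          p' * t K (n + 1) β.castSucc γ.castSucc * q' +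
            p' * (q' * t K (n + 1) β.castSucc γ.castSucc -
              t K (n + 1) β.castSucc γ.castSucc * q') := by
        simp only [mul_sub, mul_assoc]
        abel
      rw [hkey]
      exact add_mem (hmem _ _ (mul_mem hp' (hgenA β γ)) hq') (hmem _ _ hp' (hcomm q' hq' β γ))
    | zero => simp
    | add x y _ _ hx hy => simpa [add_mul] using add_mem hx hy
    | smul a x _ hx => rw [smul_mul_assoc]; exact Submodule.smul_mem _ _ hx
  -- M is stable under right multiplication by A
  have hMmulA : ∀ p ∈ A, ∀ z ∈ M, z * p ∈ M := by
    intro p hp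
    induction hp using Algebra.adjoin_induction with
    | mem x hx =>
      obtain ⟨β, γ, rfl⟩ := hx
      exact hMmulGenA β γ
    | algebraMap r =>
      intro z hz
      rw [← Algebra.commutes, ← Algebra.smul_def]
      exact Submodule.smul_mem _ _ hz
    | add x y hxA hyA hx hy =>
      intro z hz
      rw [mul_add]
      exact add_mem (hx z hz) (hy z hz)
    | mul x y hxA hyA hx hy =>
      intro z hz
      rw [← mul_assoc]
      exact hy _ (hx z hz)
  -- M is closed under multiplication
  have hMmulM : ∀ z ∈ M, ∀ w ∈ M, z * w ∈ M := by
    intro z hz w hw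
    induction hw using Submodule.span_induction with
    | mem x hx =>
      obtain ⟨p', hp', q', hq', rfl⟩ := hx
      rw [← mul_assoc]
      exact hMmulB q' hq' _ (hMmulA p' hp' z hz)
    | zero => simp
    | add x y _ _ hx hy => simpa [mul_add] using add_mem hx hy
    | smul a x _ hx => rw [mul_smul_comm]; exact Submodule.smul_mem _ _ hx
  have honeM : (1 : T K (n + 1)) ∈ M := by
    simpa using hmem 1 1 (one_mem A) (one_mem B)
  have halgM : ∀ r : K, algebraMap K (T K (n + 1)) r ∈ M := fun r => by
    rw [Algebra.algebraMap_eq_smul_one]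
    exact Submodule.smul_mem _ _ honeM
  -- all generators of T lie in M
  have hgenM : ∀ i j : Fin (n + 1), t K (n + 1) i j ∈ M := by
    intro i j
    by_cases hij : i = j
    · subst hij
      rw [t_diag]
      exact zero_mem M
    · by_cases hi : i = Fin.last n
      · subst hi
        obtain ⟨j', rfl⟩ := Fin.exists_castSucc_eq.2 (Ne.symm hij)
        rw [t_symm]
        simpa using hmem 1 _ (one_mem A) (hgenB j')
      · obtain ⟨i', rfl⟩ := Fin.exists_castSucc_eq.2 hi
        by_cases hj : j = Fin.last n
        · subst hj
          simpa using hmem 1 _ (one_mem A) (hgenB i')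
        · obtain ⟨j', rfl⟩ := Fin.exists_castSucc_eq.2 hj
          simpa using hmem _ 1 (hgenA i' j') (one_mem B)
  -- conclude by induction over the free algebra
  obtain ⟨w, rfl⟩ := RingQuot.mkAlgHom_surjective K (Rel K (n + 1)) z
  induction w using FreeAlgebra.induction with
  | grade0 r => rw [AlgHom.commutes]; exact halgM r
  | grade1 g =>
    obtain ⟨⟨i, j⟩, hij⟩ := g
    rw [← t_def i j hij]
    exact hgenM i j
  | mul a b ha hb => rw [map_mul]; exact hMmulM _ ha _ hb
  | add a b ha hb => rw [map_add]; exact add_mem ha hb
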